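/- arXiv:2501.18061 — 11 statements merged into one kernel-verified Lean document; each statement's English description precedes it below -/
import Mathlib

section
/- Let A, B be finite sets with subsets C ⊆ A and D ⊆ B, and let f : A → B and g : C → D be bijections. For each a ∈ A \ C, there exists a least non-negative integer k such that (f ∘ g⁻¹)^k (f a) ∈ B \ D, where (f ∘ g⁻¹) is applied as long as the current element lies in D. -/
/-- One step of the Garsia–Milne iteration: apply `g⁻¹` (partial inverse of `g` on `C`)
followed by `f`. -/
noncomputable def gmStep {α β : Type*} [Nonempty α] (f g : α → β) (C : Set α) : β → β :=
  fun b => f (Function.invFunOn g C b)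

/-- For any `a ∈ A \ C`, the Garsia–Milne iteration starting at `f a` eventually leaves `D`:
there is a (least) `k` with `(f ∘ g⁻¹)^[k] (f a) ∈ B \ D`, all earlier iterates lying in `D`. -/
theorem gm_termination {α β : Type*} [Nonempty α] [DecidableEq α] [DecidableEq β]
    (A C : Finset α) (B D : Finset β) (hCA : C ⊆ A) (hDB : D ⊆ B)
    (f g : α → β) (hf : Set.BijOn f (A : Set α) (B : Set β))
    (hg : Set.BijOn g (C : Set α) (D : Set β)) :
    ∀ a ∈ (A : Set α) \ (C : Set α),
      ∃ k : ℕ, (gmStep f g (C : Set α))^[k] (f a) ∈ (B : Set β) \ (D : Set β) ∧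
        ∀ j < k, (gmStep f g (C : Set α))^[j] (f a) ∈ (D : Set β) := by
  classical
  intro a ha
  obtain ⟨haA, haC⟩ := ha
  set s : Set α := (C : Set α)
  set step := gmStep f g (C : Set α) with hstep
  -- basic facts about one step on D
  have hinv_mem : ∀ b ∈ (D : Set β), Function.invFunOn g (C : Set α) b ∈ (C : Set α) := by
    intro b hb
    exact Function.invFunOn_mem (hg.surjOn hb)
  have hinv_eq : ∀ b ∈ (D : Set β), g (Function.invFunOn g (C : Set α) b) = b := by
    intro b hb
    exact Function.invFunOn_eq (hg.surjOn hb)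
  have hstepB : ∀ b ∈ (D : Set β), step b ∈ (B : Set β) := by
    intro b hb
    exact hf.mapsTo (hCA (hinv_mem b hb))
  have hstep_inj : ∀ b₁ ∈ (D : Set β), ∀ b₂ ∈ (D : Set β), step b₁ = step b₂ → b₁ = b₂ := by
    intro b₁ h₁ b₂ h₂ h
    have hc : Function.invFunOn g (C : Set α) b₁ = Function.invFunOn g (C : Set α) b₂ :=
      hf.injOn (hCA (hinv_mem b₁ h₁)) (hCA (hinv_mem b₂ h₂)) h
    have := congrArg g hc
    rwa [hinv_eq b₁ h₁, hinv_eq b₂ h₂] at this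
  -- there exists k with iterate ∉ D
  have hexists : ∃ k : ℕ, step^[k] (f a) ∉ (D : Set β) := by
    by_contra hall
    push_neg at hall
    -- iterated injectivity
    have hiter_inj : ∀ n : ℕ, ∀ x y : β, (∀ m, step^[m] x ∈ (D : Set β)) →
        (∀ m, step^[m] y ∈ (D : Set β)) → step^[n] x = step^[n] y → x = y := by
      intro n
      induction n with
      | zero => intro x y _ _ h; simpa using h
      | succ n ih =>
        intro x y hx hy h
        apply hstep_inj x (hx 0) y (hy 0)
        apply ih (step x) (step y)
        · intro m; simpa [Function.iterate_succ_apply] using hx (m + 1)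
        · intro m; simpa [Function.iterate_succ_apply] using hy (m + 1)
        · simpa [Function.iterate_succ_apply] using h
    -- pigeonhole on ℕ → D
    obtain ⟨i, j, hij, heq⟩ : ∃ i j : ℕ, i < j ∧ step^[i] (f a) = step^[j] (f a) := by
      have : ¬ Function.Injective (fun n : ℕ => (⟨step^[n] (f a), hall n⟩ : D)) := by
        intro hinj
        exact not_injective_infinite_finite _ hinj
      rw [Function.not_injective_iff] at this
      obtain ⟨i, j, heq, hne⟩ := this
      rcases lt_or_gt_of_ne hne with h | h
      · exact ⟨i, j, h, by simpa using congrArg Subtype.val heq⟩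
      · exact ⟨j, i, h, by simpa using (congrArg Subtype.val heq).symm⟩
    -- cancel i steps
    have hall' : ∀ m, step^[m] (step^[j - i] (f a)) ∈ (D : Set β) := by
      intro m; rw [← Function.iterate_add_apply]; exact hall _
    have hcancel : f a = step^[j - i] (f a) := by
      apply hiter_inj i _ _ hall hall'
      rw [← Function.iterate_add_apply, Nat.add_sub_cancel' hij.le]
      exact heq
    -- derive a ∈ C, contradiction
    obtain ⟨p, hp⟩ : ∃ p, j - i = p + 1 := ⟨j - i - 1, by omega⟩
    rw [hp, Function.iterate_succ_apply'] at hcancel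
    have hprev : step^[p] (f a) ∈ (D : Set β) := hall p
    have hcC : Function.invFunOn g (C : Set α) (step^[p] (f a)) ∈ (C : Set α) :=
      hinv_mem _ hprev
    have : a = Function.invFunOn g (C : Set α) (step^[p] (f a)) :=
      hf.injOn haA (hCA hcC) hcancel
    exact haC (this ▸ hcC)
  -- take the least such k
  set k := Nat.find hexists with hkdef
  have hk : step^[k] (f a) ∉ (D : Set β) := Nat.find_spec hexists
  have hkmin : ∀ j < k, step^[j] (f a) ∈ (D : Set β) := fun j hj =>
    not_not.mp (Nat.find_min hexists hj)
  refine ⟨k, ⟨?_, hk⟩, hkmin⟩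
  rcases Nat.eq_zero_or_pos k with h0 | hpos
  · rw [h0]; simpa using hf.mapsTo haA
  · have hprev : step^[k - 1] (f a) ∈ (D : Set β) := hkmin (k - 1) (by omega)
    have : step^[k] (f a) = step (step^[k - 1] (f a)) := by
      conv_lhs => rw [show k = (k - 1) + 1 by omega]
      rw [Function.iterate_succ_apply']
    rw [this]
    exact hstepB _ hprev
end

section
/- The Garsia–Milne map α : A \ C → B \ D defined by α(a) = (f ∘ g⁻¹)^k (f a), where k is the least non-negative integer such that this element lies in B \ D, is a bijection from A \ C onto B \ D. -/
/-- The Garsia–Milne map: iterate `f ∘ g⁻¹` starting at `f a`, stopping at the first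
(i.e., least) index at which the iterate leaves `D`. -/
noncomputable def gmMap {α β : Type*} [Nonempty α] (f g : α → β) (C : Set α) (D : Set β)
    (a : α) : β :=
  (gmStep f g C)^[sInf {k : ℕ | (gmStep f g C)^[k] (f a) ∉ D}] (f a)

section GMaux

variable {α β : Type*} [Nonempty α]
variable {f g : α → β} {C A : Set α} {D B : Set β}

lemma gm_inv_mem (hg : Set.BijOn g C D) {b : β} (hb : b ∈ D) :
    Function.invFunOn g C b ∈ C := by
  obtain ⟨c, hc, hcb⟩ := hg.surjOn hb
  exact Function.invFunOn_mem ⟨c, hc, hcb⟩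

lemma gm_inv_eq (hg : Set.BijOn g C D) {b : β} (hb : b ∈ D) :
    g (Function.invFunOn g C b) = b := by
  obtain ⟨c, hc, hcb⟩ := hg.surjOn hb
  exact Function.invFunOn_eq ⟨c, hc, hcb⟩

/-- The step maps `D` into `B`. -/
lemma gm_step_mem (hCA : C ⊆ A) (hf : Set.BijOn f A B) (hg : Set.BijOn g C D)
    {b : β} (hb : b ∈ D) : gmStep f g C b ∈ B :=
  hf.mapsTo (hCA (gm_inv_mem hg hb))

/-- The step is injective on `D`. -/
lemma gm_step_inj (hCA : C ⊆ A) (hf : Set.BijOn f A B) (hg : Set.BijOn g C D)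
    {b₁ b₂ : β} (h₁ : b₁ ∈ D) (h₂ : b₂ ∈ D) (h : gmStep f g C b₁ = gmStep f g C b₂) :
    b₁ = b₂ := by
  have := hf.injOn (hCA (gm_inv_mem hg h₁)) (hCA (gm_inv_mem hg h₂)) h
  rw [← gm_inv_eq hg h₁, ← gm_inv_eq hg h₂, this]

/-- The step of an element of `D` is never `f a` for `a ∈ A \ C`. -/
lemma gm_step_ne (hCA : C ⊆ A) (hf : Set.BijOn f A B) (hg : Set.BijOn g C D)
    {a : α} (ha : a ∈ A) (ha' : a ∉ C) {b : β} (hb : b ∈ D) :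
    gmStep f g C b ≠ f a := by
  intro h
  have heq : Function.invFunOn g C b = a :=
    hf.injOn (hCA (gm_inv_mem hg hb)) ha h
  exact ha' (heq ▸ gm_inv_mem hg hb)

/-- The peeling argument: two escape sequences that agree at their escape points
start at the same element. -/
lemma gm_peel (hCA : C ⊆ A) (hf : Set.BijOn f A B) (hg : Set.BijOn g C D)
    {a₁ a₂ : α} (h₁A : a₁ ∈ A) (h₁C : a₁ ∉ C) (h₂A : a₂ ∈ A) (h₂C : a₂ ∉ C) :
    ∀ k₁ k₂ : ℕ, (∀ k < k₁, (gmStep f g C)^[k] (f a₁) ∈ D) →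
      (∀ k < k₂, (gmStep f g C)^[k] (f a₂) ∈ D) →
      (gmStep f g C)^[k₁] (f a₁) = (gmStep f g C)^[k₂] (f a₂) → a₁ = a₂ := by
  intro k₁
  induction k₁ with
  | zero =>
    intro k₂ _ hd₂ h
    cases k₂ with
    | zero => exact hf.injOn h₁A h₂A h
    | succ m =>
      rw [Function.iterate_succ_apply'] at h
      exact absurd h.symm (gm_step_ne hCA hf hg h₁A h₁C (hd₂ m (Nat.lt_succ_self m)))
  | succ n ih =>
    intro k₂ hd₁ hd₂ h
    cases k₂ with
    | zero =>
      rw [Function.iterate_succ_apply'] at h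
      exact absurd h (gm_step_ne hCA hf hg h₂A h₂C (hd₁ n (Nat.lt_succ_self n)))
    | succ m =>
      rw [Function.iterate_succ_apply', Function.iterate_succ_apply'] at h
      exact ih m (fun k hk => hd₁ k (hk.trans (Nat.lt_succ_self n)))
        (fun k hk => hd₂ k (hk.trans (Nat.lt_succ_self m)))
        (gm_step_inj hCA hf hg (hd₁ n (Nat.lt_succ_self n)) (hd₂ m (Nat.lt_succ_self m)) h)

/-- For `a ∈ A \ C`, some iterate leaves `D`. -/
lemma gm_escape (hCA : C ⊆ A) (hf : Set.BijOn f A B) (hg : Set.BijOn g C D)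
    (hD : D.Finite) {a : α} (haA : a ∈ A) (haC : a ∉ C) :
    {k : ℕ | (gmStep f g C)^[k] (f a) ∉ D}.Nonempty := by
  by_contra hne
  rw [Set.not_nonempty_iff_eq_empty] at hne
  have hall : ∀ k, (gmStep f g C)^[k] (f a) ∈ D := by
    intro k
    by_contra hk
    exact absurd (hne ▸ (hk : k ∈ {k : ℕ | (gmStep f g C)^[k] (f a) ∉ D}))
      (Set.notMem_empty k)
  have hinj : ∀ i j : ℕ, (gmStep f g C)^[i] (f a) = (gmStep f g C)^[j] (f a) → i = j := by
    intro i
    induction i with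
    | zero =>
      intro j h
      cases j with
      | zero => rfl
      | succ m =>
        rw [Function.iterate_succ_apply'] at h
        exact absurd h.symm (gm_step_ne hCA hf hg haA haC (hall m))
    | succ n ih =>
      intro j h
      cases j with
      | zero =>
        rw [Function.iterate_succ_apply'] at h
        exact absurd h (gm_step_ne hCA hf hg haA haC (hall n))
      | succ m =>
        rw [Function.iterate_succ_apply', Function.iterate_succ_apply'] at h
        exact congrArg Nat.succ (ih m (gm_step_inj hCA hf hg (hall n) (hall m) h))
  exact (Set.infinite_of_injective_forall_mem
    (f := fun k : ℕ => (gmStep f g C)^[k] (f a))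
    (fun i j hij => hinj i j hij) hall) hD

end GMaux

/-- The Garsia–Milne map `α : A \ C → B \ D` is a bijection from `A \ C` onto `B \ D`. -/
theorem gm_bijection {α β : Type*} [Nonempty α] [DecidableEq α] [DecidableEq β]
    (A C : Finset α) (B D : Finset β) (hCA : C ⊆ A) (hDB : D ⊆ B)
    (f g : α → β) (hf : Set.BijOn f (A : Set α) (B : Set β))
    (hg : Set.BijOn g (C : Set α) (D : Set β)) :
    Set.BijOn (gmMap f g (C : Set α) (D : Set β))
      ((A : Set α) \ (C : Set α)) ((B : Set β) \ (D : Set β)) := by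
  have hCA' : (C : Set α) ⊆ (A : Set α) := Finset.coe_subset.mpr hCA
  set S := gmStep f g (C : Set α) with hS
  set K : α → ℕ := fun a => sInf {k : ℕ | S^[k] (f a) ∉ (D : Set β)} with hK
  have hgm : ∀ a, gmMap f g (C : Set α) (D : Set β) a = S^[K a] (f a) := fun a => rfl
  -- basic facts about the escape index for a ∈ A \ C
  have hKmem : ∀ a, a ∈ (A : Set α) → a ∉ (C : Set α) → S^[K a] (f a) ∉ (D : Set β) :=
    fun a haA haC => Nat.sInf_mem (gm_escape hCA' hf hg D.finite_toSet haA haC)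
  have hKlt : ∀ a, ∀ k < K a, S^[k] (f a) ∈ (D : Set β) := by
    intro a k hk
    by_contra h
    exact Nat.notMem_of_lt_sInf hk h
  have hmapsTo : Set.MapsTo (gmMap f g (C : Set α) (D : Set β))
      ((A : Set α) \ (C : Set α)) ((B : Set β) \ (D : Set β)) := by
    intro a ha
    rw [hgm]
    refine ⟨?_, hKmem a ha.1 ha.2⟩
    cases hKa : K a with
    | zero => simpa using hf.mapsTo ha.1
    | succ m =>
      rw [Function.iterate_succ_apply']
      exact gm_step_mem hCA' hf hg (hKlt a m (hKa ▸ Nat.lt_succ_self m))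
  have hinjOn : Set.InjOn (gmMap f g (C : Set α) (D : Set β))
      ((A : Set α) \ (C : Set α)) := by
    intro a₁ ha₁ a₂ ha₂ h
    rw [hgm, hgm] at h
    exact gm_peel hCA' hf hg ha₁.1 ha₁.2 ha₂.1 ha₂.2 (K a₁) (K a₂)
      (hKlt a₁) (hKlt a₂) h
  -- cardinality
  have hAB : B.card = A.card := by
    rw [← Set.ncard_coe_finset, ← hf.image_eq, Set.ncard_image_of_injOn hf.injOn,
      Set.ncard_coe_finset]
  have hCD : D.card = C.card := by
    rw [← Set.ncard_coe_finset, ← hg.image_eq, Set.ncard_image_of_injOn hg.injOn,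
      Set.ncard_coe_finset]
  have hcard : (B \ D).card ≤ (A \ C).card := by
    rw [Finset.card_sdiff_of_subset hDB, Finset.card_sdiff_of_subset hCA, hAB, hCD]
  have hsurj := Finset.surj_on_of_inj_on_of_card_le
    (s := A \ C) (t := B \ D)
    (fun a _ => gmMap f g (C : Set α) (D : Set β) a)
    (fun a ha => by
      have := hmapsTo (by simpa [Finset.mem_sdiff] using (Finset.mem_sdiff.mp ha))
      simpa [Finset.mem_sdiff] using this)
    (fun a₁ a₂ ha₁ ha₂ h => hinjOn
      (by simpa [Finset.mem_sdiff] using (Finset.mem_sdiff.mp ha₁))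
      (by simpa [Finset.mem_sdiff] using (Finset.mem_sdiff.mp ha₂)) h)
    hcard
  refine ⟨hmapsTo, hinjOn, ?_⟩
  intro b hb
  obtain ⟨a, ha, hab⟩ := hsurj b (Finset.mem_sdiff.mpr ⟨hb.1, fun h => hb.2 h⟩)
  exact ⟨a, by simpa [Finset.mem_sdiff] using (Finset.mem_sdiff.mp ha), hab.symm⟩
end

section
/- For natural numbers c and f ≥ 1, the mean of the distribution p(i) = C(f+c-i, f-1)/C(c+f, c) on i ∈ {1,…,c+1} equals (c+f+1)/(f+1), i.e., ∑_{i=1}^{c+1} i · C(f+c-i, f-1) = C(c+f, c) · (c+f+1)/(f+1). -/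
open Finset

private lemma hockey (g n : ℕ) :
    ∑ j ∈ range (n + 1), Nat.choose (g + j) g = Nat.choose (g + n + 1) (g + 1) := by
  induction n with
  | zero => simp
  | succ n ih =>
      rw [sum_range_succ, ih]
      calc Nat.choose (g + n + 1) (g + 1) + Nat.choose (g + (n + 1)) g
          = Nat.choose (g + n + 1) g + Nat.choose (g + n + 1) (g + 1) := by
            rw [show g + (n + 1) = g + n + 1 from by ring]; ring
        _ = Nat.choose (g + n + 1 + 1) (g + 1) := (Nat.choose_succ_succ' _ _).symm
        _ = Nat.choose (g + (n + 1) + 1) (g + 1) := by congr 1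

private lemma aux (c g : ℕ) :
    ∑ j ∈ range (c + 1), (c + 1 - j) * Nat.choose (g + j) g =
      Nat.choose (g + c + 2) (g + 2) := by
  induction c with
  | zero => simp
  | succ c ih =>
      have split : ∀ j ∈ range (c + 2),
          (c + 2 - j) * Nat.choose (g + j) g =
            (c + 1 - j) * Nat.choose (g + j) g + Nat.choose (g + j) g := by
        intro j hj
        rw [mem_range] at hj
        have : c + 2 - j = (c + 1 - j) + 1 := by omega
        rw [this, add_mul, one_mul]
      rw [sum_congr rfl split, Finset.sum_add_distrib]
      have h1 : ∑ j ∈ range (c + 2), (c + 1 - j) * Nat.choose (g + j) g =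
          ∑ j ∈ range (c + 1), (c + 1 - j) * Nat.choose (g + j) g := by
        rw [sum_range_succ]
        simp
      rw [h1, ih, hockey]
      calc Nat.choose (g + c + 2) (g + 2) + Nat.choose (g + (c + 1) + 1) (g + 1)
          = Nat.choose (g + c + 2) (g + 1) + Nat.choose (g + c + 2) (g + 1 + 1) := by
            rw [show g + (c + 1) + 1 = g + c + 2 from by ring,
                show g + 1 + 1 = g + 2 from by ring]; ring
        _ = Nat.choose (g + c + 2 + 1) (g + 1 + 1) := (Nat.choose_succ_succ' _ _).symm
        _ = Nat.choose (g + (c + 1) + 2) (g + 2) := by congr 1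

private lemma nat_sum (c f : ℕ) (hf : 1 ≤ f) :
    ∑ i ∈ Finset.Icc 1 (c + 1), i * Nat.choose (f + c - i) (f - 1) =
      Nat.choose (f + c + 1) (f + 1) := by
  obtain ⟨g, rfl⟩ : ∃ g, f = g + 1 := ⟨f - 1, by omega⟩
  have haux := aux c g
  have e1 : g + c + 2 = g + 1 + c + 1 := by ring
  have e2 : g + 2 = g + 1 + 1 := by ring
  rw [e1, e2] at haux
  rw [← haux]
  refine Finset.sum_nbij' (fun i => c + 1 - i) (fun j => c + 1 - j) ?_ ?_ ?_ ?_ ?_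
  · intro i hi; simp only [mem_Icc] at hi; simp only [mem_range]; omega
  · intro j hj; simp only [mem_range] at hj; simp only [mem_Icc]; omega
  · intro i hi; simp only [mem_Icc] at hi; show c + 1 - (c + 1 - i) = i; omega
  · intro j hj; simp only [mem_range] at hj; show c + 1 - (c + 1 - j) = j; omega
  · intro i hi
    simp only [mem_Icc] at hi
    have h1 : g + (c + 1 - i) = g + 1 + c - i := by omega
    have h2 : c + 1 - (c + 1 - i) = i := by omega
    have h3 : g + 1 - 1 = g := by omega
    rw [h1, h2, h3]

/-- The mean of the single-man request distribution `p(i) = C(f+c-i, f-1)/C(c+f, c)`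
on `{1, …, c+1}` equals `(c+f+1)/(f+1)`. -/
theorem single_man_mean (c f : ℕ) (hf : 1 ≤ f) :
    ∑ i ∈ Finset.Icc 1 (c + 1), (i : ℚ) * (Nat.choose (f + c - i) (f - 1) : ℚ) =
      (Nat.choose (c + f) c : ℚ) * ((c : ℚ) + f + 1) / ((f : ℚ) + 1) := by
  have key : ∑ i ∈ Finset.Icc 1 (c + 1), (i : ℚ) * (Nat.choose (f + c - i) (f - 1) : ℚ) =
      (Nat.choose (f + c + 1) (f + 1) : ℚ) := by
    rw [← nat_sum c f hf]
    push_cast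
    rfl
  rw [key]
  have hne : ((f : ℚ) + 1) ≠ 0 := by positivity
  rw [eq_div_iff hne]
  have natid : Nat.choose (f + c + 1) (f + 1) * (f + 1) =
      Nat.choose (c + f) c * (c + f + 1) := by
    have h := Nat.add_one_mul_choose_eq (f + c) f
    calc Nat.choose (f + c + 1) (f + 1) * (f + 1) = (f + c + 1) * Nat.choose (f + c) f := by
          rw [← h]
      _ = Nat.choose (c + f) c * (c + f + 1) := by
          rw [Nat.add_comm f c, Nat.choose_symm_add]
          ring_nf
  exact_mod_cast natid
end

section
/- For natural numbers c and f ≥ 1, the variance of the distribution p(i) = C(f+c-i, f-1)/C(c+f, c) on i ∈ {1,…,c+1} equals (c+f+1)·c·f / ((f+1)²·(f+2)). -/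
/-!
With `g = f - 1` and `j = i - 1`, the weights are `C(c - j + g, g)`, and their binomial
moments `∑ⱼ C(j + r, r) C(c - j + g, g) = C(c + g + r + 1, g + r + 1)` are an instance of the
Chu–Vandermonde identity at negative upper arguments, since
`C(-(a + 1), i) = (-1)ⁱ C(i + a, a)`.
Expanding `(j + 1 - μ)²` in the basis `C(j + r, r)`, `r ≤ 2`, turns the variance into a
combination of three consecutive binomial coefficients, whose ratios are rational functions of
`c` and `g`.
-/

open Finset

theorem Ring.choose_neg_natCast_add_one (m k : ℕ) :
    Ring.choose (-((m + 1 : ℕ) : ℤ)) k = (-1) ^ k * ((k + m).choose m : ℤ) := by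
  rw [Ring.choose_neg, Units.smul_def, Int.coe_negOnePow_natCast, smul_eq_mul,
    ← Nat.choose_symm_add, ← Ring.choose_natCast]
  push_cast
  ring_nf

theorem Nat.sum_range_add_choose_mul_add_choose (a b n : ℕ) :
    ∑ i ∈ range (n + 1), (i + a).choose a * (n - i + b).choose b =
      (n + a + b + 1).choose (a + b + 1) := by
  have h := Ring.add_choose_eq (r := -((a + 1 : ℕ) : ℤ)) (s := -((b + 1 : ℕ) : ℤ)) n
    (Commute.all _ _)
  rw [← neg_add, ← Nat.cast_add, show a + 1 + (b + 1) = (a + b + 1) + 1 by ring] at h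
  simp only [Ring.choose_neg_natCast_add_one] at h
  rw [sum_congr rfl fun ij hij => by
    rw [mul_mul_mul_comm, ← pow_add, mem_antidiagonal.1 hij], ← mul_sum] at h
  rw [← Nat.sum_antidiagonal_eq_sum_range_succ (fun i j => (i + a).choose a * (j + b).choose b),
    show n + a + b + 1 = n + (a + b + 1) by ring, ← Nat.cast_inj (R := ℤ), Nat.cast_sum]
  push_cast
  exact (mul_right_injective₀ (pow_ne_zero n (by norm_num : (-1 : ℤ) ≠ 0)) h).symm

theorem Nat.cast_add_one_choose_add_one {K : Type*} [Field K] [CharZero K] (n k : ℕ) :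
    ((n + 1).choose (k + 1) : K) = (n + 1) / (k + 1) * n.choose k := by
  rw [div_mul_eq_mul_div, eq_div_iff (Nat.cast_add_one_ne_zero k)]
  exact_mod_cast (Nat.add_one_mul_choose_eq n k).symm

theorem sum_range_sq_sub_mul_add_choose {R : Type*} [CommRing R] (c g : ℕ) (μ : R) :
    ∑ k ∈ range (c + 1), ((k : R) + 1 - μ) ^ 2 * (c - k + g).choose g =
      2 * (c + g + 3).choose (g + 3) - (2 * μ + 1) * (c + g + 2).choose (g + 2) +
        μ ^ 2 * (c + g + 1).choose (g + 1) := by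
  have binomial_moment (r : ℕ) :
      ∑ k ∈ range (c + 1), ((k + r).choose r : R) * (c - k + g).choose g =
        (c + g + r + 1).choose (g + r + 1) := by
    rw [add_right_comm c g, add_comm g]
    exact_mod_cast congrArg (Nat.cast : ℕ → R) (Nat.sum_range_add_choose_mul_add_choose r g c)
  calc _ = ∑ k ∈ range (c + 1), (2 * ((k + 2).choose 2 : R) - (2 * μ + 1) * (k + 1).choose 1
        + μ ^ 2 * (k + 0).choose 0) * (c - k + g).choose g := by
        refine sum_congr rfl fun k _ => ?_
        have two_mul_choose_two : 2 * ((k + 2).choose 2 : R) = (k + 2) * (k + 1) := by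
          have h := congrArg (Nat.cast : ℕ → R) (Nat.add_one_mul_choose_eq (k + 1) 1)
          push_cast [Nat.choose_one_right] at h
          linear_combination -h
        rw [two_mul_choose_two, Nat.choose_one_right, Nat.choose_zero_right]
        push_cast
        ring
    _ = _ := by
        simp only [add_mul, sub_mul, mul_assoc, sum_add_distrib, sum_sub_distrib, ← mul_sum,
          binomial_moment]

/-- The variance of the single-man request distribution `p(i) = C(f+c-i, f-1)/C(c+f, c)`
on `{1, …, c+1}` equals `(c+f+1)·c·f / ((f+1)²·(f+2))`. -/
theorem single_man_variance (c f : ℕ) (hf : 1 ≤ f) :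
    ∑ i ∈ Finset.Icc 1 (c + 1),
        ((i : ℚ) - ((c : ℚ) + f + 1) / ((f : ℚ) + 1)) ^ 2 *
          ((Nat.choose (f + c - i) (f - 1) : ℚ) / (Nat.choose (c + f) c : ℚ)) =
      (((c : ℚ) + f + 1) * c * f) / (((f : ℚ) + 1) ^ 2 * ((f : ℚ) + 2)) := by
  obtain ⟨g, rfl⟩ := Nat.exists_eq_add_of_le' hf
  have hN : ((c + g + 1).choose (g + 1) : ℚ) ≠ 0 :=
    Nat.cast_ne_zero.2 (Nat.choose_pos (by omega)).ne'
  calc _ = (∑ k ∈ range (c + 1), ((k : ℚ) + 1 - (c + g + 2) / (g + 2)) ^ 2 *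
          (c - k + g).choose g) / ((c + g + 1).choose (g + 1) : ℚ) := by
        rw [← Ico_add_one_right_eq_Icc, sum_Ico_eq_sum_range, Nat.add_sub_cancel, sum_div]
        refine sum_congr rfl fun k hk => ?_
        rw [show g + 1 + c - (1 + k) = c - k + g by grind, Nat.add_sub_cancel,
          Nat.choose_symm_add, ← add_assoc]
        push_cast
        ring
    _ = _ := by
        rw [sum_range_sq_sub_mul_add_choose, Nat.cast_add_one_choose_add_one (c + g + 2),
          Nat.cast_add_one_choose_add_one (c + g + 1)]
        push_cast
        field_simp
        ring
end

section
/- For natural numbers c and f ≥ 1, the mean of the distribution q(i) = C(i-1, f-1)/C(c+f, c) on i ∈ {f,…,c+f} equals f(c+f+1)/(f+1), i.e., ∑_{i=f}^{c+f} i · C(i-1, f-1) = C(c+f, c) · f(c+f+1)/(f+1). -/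
/-- The mean of the total-requests distribution `q(i) = C(i-1, f-1)/C(c+f, c)`
on `{f, …, c+f}` equals `f(c+f+1)/(f+1)`. -/
theorem total_requests_mean (c f : ℕ) (hf : 1 ≤ f) :
    ∑ i ∈ Finset.Icc f (c + f), (i : ℚ) * (Nat.choose (i - 1) (f - 1) : ℚ) =
      (Nat.choose (c + f) c : ℚ) * ((f : ℚ) * ((c : ℚ) + f + 1)) / ((f : ℚ) + 1) := by
  have hstep : ∀ i ∈ Finset.Icc f (c + f),
      (i : ℚ) * (Nat.choose (i - 1) (f - 1) : ℚ) = (f : ℚ) * (Nat.choose i f : ℚ) := by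
    intro i hi
    have hi1 : 1 ≤ i := le_trans hf (Finset.mem_Icc.mp hi).1
    have h := Nat.add_one_mul_choose_eq (i - 1) (f - 1)
    simp only [Nat.succ_eq_add_one, Nat.sub_add_cancel hi1, Nat.sub_add_cancel hf] at h
    have : (i * Nat.choose (i - 1) (f - 1) : ℚ) = (Nat.choose i f * f : ℚ) := by
      exact_mod_cast congrArg (Nat.cast : ℕ → ℚ) h
    linarith [this]
  rw [Finset.sum_congr rfl hstep, ← Finset.mul_sum]
  have hsum : ∑ i ∈ Finset.Icc f (c + f), (Nat.choose i f : ℚ)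
      = (Nat.choose (c + f + 1) (f + 1) : ℚ) := by
    exact_mod_cast congrArg (Nat.cast : ℕ → ℚ) (Nat.sum_Icc_choose (c + f) f)
  rw [hsum]
  have h2 := Nat.add_one_mul_choose_eq (c + f) f
  have h2' : ((c + f + 1) * Nat.choose (c + f) f : ℚ)
      = (Nat.choose (c + f + 1) (f + 1) * (f + 1) : ℚ) := by exact_mod_cast h2
  have hsym : Nat.choose (c + f) f = Nat.choose (c + f) c := by
    rw [Nat.add_comm]; exact Nat.choose_symm_add
  rw [hsym] at h2'
  have hf1 : (f : ℚ) + 1 ≠ 0 := by positivity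
  field_simp
  nlinarith [h2']
end

section
/- For natural numbers c and f ≥ 1, the variance of q(i) = C(i-1, f-1)/C(c+f, c) on i ∈ {f,…,c+f} equals (c+f+1)·c·f/((f+1)²·(f+2)), the same as the variance of the single-man distribution. -/
open Finset

lemma sumA (c g : ℕ) :
    ∑ i ∈ Icc (g + 1) (c + (g + 1)), Nat.choose (i - 1) g = Nat.choose (c + (g + 1)) (g + 1) := by
  induction c with
  | zero => simp
  | succ n ih =>
    rw [show n + 1 + (g + 1) = (n + (g + 1)) + 1 by ring,
      Finset.sum_Icc_succ_top (by omega), ih,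
      show n + (g + 1) + 1 - 1 = n + g + 1 by omega,
      show n + (g + 1) + 1 = n + g + 2 by omega,
      show n + (g + 1) = n + g + 1 by omega]
    have h3 : Nat.choose (n + g + 2) (g + 1) = Nat.choose (n + g + 1) g + Nat.choose (n + g + 1) (g + 1) :=
      Nat.choose_succ_succ (n + g + 1) g
    rw [h3]; ring

lemma sumB (c g : ℕ) :
    ∑ i ∈ Icc (g + 1) (c + (g + 1)), (i : ℚ) * (Nat.choose (i - 1) g : ℚ)
      = ((g : ℚ) + 1) * (Nat.choose (c + (g + 1) + 1) (g + 2) : ℚ) := by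
  induction c with
  | zero => simp
  | succ n ih =>
    rw [show n + 1 + (g + 1) = (n + (g + 1)) + 1 by ring,
      Finset.sum_Icc_succ_top (by omega), ih]
    simp only [show n + (g + 1) + 1 - 1 = n + g + 1 by omega,
      show n + (g + 1) + 1 + 1 = n + g + 3 by omega,
      show n + (g + 1) + 1 = n + g + 2 by omega]
    have h2 : (n + g + 2) * Nat.choose (n + g + 1) g = Nat.choose (n + g + 2) (g + 1) * (g + 1) :=
      Nat.add_one_mul_choose_eq (n + g + 1) g
    have h3 : Nat.choose (n + g + 3) (g + 2) = Nat.choose (n + g + 2) (g + 1) + Nat.choose (n + g + 2) (g + 2) :=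
      Nat.choose_succ_succ (n + g + 2) (g + 1)
    have q2 : ((n : ℚ) + g + 2) * (Nat.choose (n + g + 1) g : ℚ)
        = (Nat.choose (n + g + 2) (g + 1) : ℚ) * ((g : ℚ) + 1) := by exact_mod_cast h2
    have q3 : (Nat.choose (n + g + 3) (g + 2) : ℚ)
        = (Nat.choose (n + g + 2) (g + 1) : ℚ) + (Nat.choose (n + g + 2) (g + 2) : ℚ) := by
      exact_mod_cast h3
    push_cast
    linear_combination q2 - ((g : ℚ) + 1) * q3

lemma sumD (c g : ℕ) :
    ∑ i ∈ Icc (g + 1) (c + (g + 1)), (i : ℚ) ^ 2 * (Nat.choose (i - 1) g : ℚ)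
      = ((g : ℚ) + 1) * ((g : ℚ) + 2) * (Nat.choose (c + (g + 1) + 2) (g + 3) : ℚ)
        - ((g : ℚ) + 1) * (Nat.choose (c + (g + 1) + 1) (g + 2) : ℚ) := by
  induction c with
  | zero => simp; ring
  | succ n ih =>
    rw [show n + 1 + (g + 1) = (n + (g + 1)) + 1 by ring,
      Finset.sum_Icc_succ_top (by omega), ih]
    simp only [show n + (g + 1) + 1 - 1 = n + g + 1 by omega,
      show n + (g + 1) + 1 + 2 = n + g + 4 by omega,
      show n + (g + 1) + 1 + 1 = n + g + 3 by omega,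
      show n + (g + 1) + 2 = n + g + 3 by omega,
      show n + (g + 1) + 1 = n + g + 2 by omega]
    have h2 : (n + g + 2) * Nat.choose (n + g + 1) g = Nat.choose (n + g + 2) (g + 1) * (g + 1) :=
      Nat.add_one_mul_choose_eq (n + g + 1) g
    have h2' : (n + g + 3) * Nat.choose (n + g + 2) (g + 1) = Nat.choose (n + g + 3) (g + 2) * (g + 2) :=
      Nat.add_one_mul_choose_eq (n + g + 2) (g + 1)
    have h3 : Nat.choose (n + g + 3) (g + 2) = Nat.choose (n + g + 2) (g + 1) + Nat.choose (n + g + 2) (g + 2) :=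
      Nat.choose_succ_succ (n + g + 2) (g + 1)
    have h4 : Nat.choose (n + g + 4) (g + 3) = Nat.choose (n + g + 3) (g + 2) + Nat.choose (n + g + 3) (g + 3) :=
      Nat.choose_succ_succ (n + g + 3) (g + 2)
    have q2 : ((n : ℚ) + g + 2) * (Nat.choose (n + g + 1) g : ℚ)
        = (Nat.choose (n + g + 2) (g + 1) : ℚ) * ((g : ℚ) + 1) := by exact_mod_cast h2
    have q2' : ((n : ℚ) + g + 3) * (Nat.choose (n + g + 2) (g + 1) : ℚ)
        = (Nat.choose (n + g + 3) (g + 2) : ℚ) * ((g : ℚ) + 2) := by exact_mod_cast h2'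
    have q3 : (Nat.choose (n + g + 3) (g + 2) : ℚ)
        = (Nat.choose (n + g + 2) (g + 1) : ℚ) + (Nat.choose (n + g + 2) (g + 2) : ℚ) := by
      exact_mod_cast h3
    have q4 : (Nat.choose (n + g + 4) (g + 3) : ℚ)
        = (Nat.choose (n + g + 3) (g + 2) : ℚ) + (Nat.choose (n + g + 3) (g + 3) : ℚ) := by
      exact_mod_cast h4
    push_cast
    linear_combination ((n : ℚ) + g + 2) * q2 + ((g : ℚ) + 1) * q2' + ((g : ℚ) + 1) * q3
      - ((g : ℚ) + 1) * ((g : ℚ) + 2) * q4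

/-- The variance of the total-requests distribution `q(i) = C(i-1, f-1)/C(c+f, c)`
on `{f, …, c+f}` equals `(c+f+1)·c·f/((f+1)²·(f+2))`. -/
theorem total_requests_variance (c f : ℕ) (hf : 1 ≤ f) :
    ∑ i ∈ Finset.Icc f (c + f),
        ((i : ℚ) - (f : ℚ) * ((c : ℚ) + f + 1) / ((f : ℚ) + 1)) ^ 2 *
          ((Nat.choose (i - 1) (f - 1) : ℚ) / (Nat.choose (c + f) c : ℚ)) =
      (((c : ℚ) + f + 1) * c * f) / (((f : ℚ) + 1) ^ 2 * ((f : ℚ) + 2)) := by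
  obtain ⟨g, rfl⟩ : ∃ g, f = g + 1 := ⟨f - 1, by omega⟩
  have hsym : Nat.choose (c + (g + 1)) c = Nat.choose (c + (g + 1)) (g + 1) := by
    have h := Nat.choose_symm (n := c + (g + 1)) (k := g + 1) (by omega)
    rwa [show c + (g + 1) - (g + 1) = c by omega] at h
  simp only [Nat.add_sub_cancel, hsym]
  have hAne : (Nat.choose (c + (g + 1)) (g + 1) : ℚ) ≠ 0 := by
    exact_mod_cast (Nat.choose_pos (show g + 1 ≤ c + (g + 1) by omega)).ne'
  set μ : ℚ := ((g + 1 : ℕ) : ℚ) * ((c : ℚ) + ((g + 1 : ℕ) : ℚ) + 1) / (((g + 1 : ℕ) : ℚ) + 1) with hμ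
  refine (Finset.sum_congr rfl (g := fun (i : ℕ) =>
      ((i : ℚ) ^ 2 * (Nat.choose (i - 1) g : ℚ)
        - 2 * μ * ((i : ℚ) * (Nat.choose (i - 1) g : ℚ))
        + μ ^ 2 * (Nat.choose (i - 1) g : ℚ)) / (Nat.choose (c + (g + 1)) (g + 1) : ℚ))
    fun i _ => by ring).trans ?_
  have L1 : ∑ i ∈ Icc (g + 1) (c + (g + 1)), ((Nat.choose (i - 1) g : ℕ) : ℚ)
      = ((Nat.choose (c + (g + 1)) (g + 1) : ℕ) : ℚ) := by exact_mod_cast sumA c g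
  rw [← Finset.sum_div, Finset.sum_add_distrib, Finset.sum_sub_distrib,
    ← Finset.mul_sum, ← Finset.mul_sum, L1, sumB, sumD]
  have hg2 : (g : ℚ) + 2 ≠ 0 := by positivity
  have hg3 : (g : ℚ) + 3 ≠ 0 := by positivity
  have r1 : (Nat.choose (c + (g + 1) + 1) (g + 2) : ℚ)
      = ((c : ℚ) + g + 2) * (Nat.choose (c + (g + 1)) (g + 1) : ℚ) / ((g : ℚ) + 2) := by
    have h := Nat.add_one_mul_choose_eq (c + (g + 1)) (g + 1)
    have q : ((c : ℚ) + g + 2) * (Nat.choose (c + (g + 1)) (g + 1) : ℚ)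
        = (Nat.choose (c + (g + 1) + 1) (g + 2) : ℚ) * ((g : ℚ) + 2) := by
      exact_mod_cast h
    field_simp
    linarith [q]
  have r2 : (Nat.choose (c + (g + 1) + 2) (g + 3) : ℚ)
      = ((c : ℚ) + g + 3) * (Nat.choose (c + (g + 1) + 1) (g + 2) : ℚ) / ((g : ℚ) + 3) := by
    have h := Nat.add_one_mul_choose_eq (c + (g + 1) + 1) (g + 2)
    have q : ((c : ℚ) + g + 3) * (Nat.choose (c + (g + 1) + 1) (g + 2) : ℚ)
        = (Nat.choose (c + (g + 1) + 2) (g + 3) : ℚ) * ((g : ℚ) + 3) := by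
      exact_mod_cast h
    field_simp
    linarith [q]
  rw [r2, r1, hμ]
  push_cast
  field_simp
  ring
end

section
/- For natural numbers c and f ≥ 1, the third central moment of the distribution p(i) = C(f+c-i, f-1)/C(c+f, c) on {1,…,c+1} equals (c+f+1)·c·f·(2cf + f² − 2c − 1)/((f+1)³·(f+2)·(f+3)). -/
open Finset

private lemma sum_choose_nat (r c : ℕ) :
    ∑ k ∈ range (c + 1), (r + k).choose r = (r + c + 1).choose (r + 1) := by
  induction c with
  | zero => simp
  | succ n ih =>
      rw [Finset.sum_range_succ, ih, show r + (n + 1) = r + n + 1 from by omega,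
        Nat.choose_succ_succ' (r + n + 1) r]
      omega

private lemma sum_chooseQ (r c : ℕ) :
    ∑ k ∈ range (c + 1), ((r + k).choose r : ℚ) = ((r + c + 1).choose (r + 1) : ℚ) := by
  rw [← Nat.cast_sum]
  exact_mod_cast congrArg (Nat.cast (R := ℚ)) (sum_choose_nat r c)

private lemma stepQ (r k : ℕ) :
    (k : ℚ) * ((r + k).choose r : ℚ) =
      ((r : ℚ) + 1) * ((r + 1 + k).choose (r + 1) : ℚ)
        - ((r : ℚ) + 1) * ((r + k).choose r : ℚ) := by
  have h := Nat.add_one_mul_choose_eq (r + k) r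
  have h2 : ((r + k + 1) * (r + k).choose r : ℚ)
      = (((r + k + 1).choose (r + 1) * (r + 1) : ℕ) : ℚ) := by exact_mod_cast congrArg (Nat.cast (R := ℚ)) h
  rw [show r + 1 + k = r + k + 1 from by omega]
  push_cast at h2 ⊢
  linarith [h2]

private lemma sum1Q (r c : ℕ) :
    ∑ k ∈ range (c + 1), (k : ℚ) * ((r + k).choose r : ℚ) =
      ((r : ℚ) + 1) * (((r + c + 2).choose (r + 2) : ℚ) - ((r + c + 1).choose (r + 1) : ℚ)) := by
  rw [Finset.sum_congr rfl (fun k _ => stepQ r k), Finset.sum_sub_distrib,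
    ← Finset.mul_sum, ← Finset.mul_sum, sum_chooseQ r c, sum_chooseQ (r+1) c,
    show r + 1 + c + 1 = r + c + 2 from by omega,
    show r + 1 + 1 = r + 2 from rfl]
  ring

private lemma sum2Q (r c : ℕ) :
    ∑ k ∈ range (c + 1), (k : ℚ)^2 * ((r + k).choose r : ℚ) =
      ((r:ℚ)+1)*((r:ℚ)+2) * (((r + c + 3).choose (r + 3) : ℚ))
      - ((r:ℚ)+1)*(2*(r:ℚ)+3) * (((r + c + 2).choose (r + 2) : ℚ))
      + ((r:ℚ)+1)^2 * (((r + c + 1).choose (r + 1) : ℚ)) := by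
  have step2 : ∀ k ∈ range (c+1), (k : ℚ)^2 * ((r + k).choose r : ℚ) =
      ((r : ℚ) + 1) * ((k:ℚ) * ((r + 1 + k).choose (r + 1) : ℚ))
        - ((r : ℚ) + 1) * ((k:ℚ) * ((r + k).choose r : ℚ)) := by
    intro k _
    have := stepQ r k
    nlinarith [this]
  rw [Finset.sum_congr rfl step2, Finset.sum_sub_distrib, ← Finset.mul_sum, ← Finset.mul_sum,
    sum1Q r c, sum1Q (r+1) c,
    show r + 1 + c + 2 = r + c + 3 from by omega,
    show r + 1 + c + 1 = r + c + 2 from by omega,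
    show r + 1 + 2 = r + 3 from rfl, show r + 1 + 1 = r + 2 from rfl]
  push_cast
  ring

private lemma sum3Q (r c : ℕ) :
    ∑ k ∈ range (c + 1), (k : ℚ)^3 * ((r + k).choose r : ℚ) =
      ((r:ℚ)+1) * ( ((r:ℚ)+2)*((r:ℚ)+3) * (((r + c + 4).choose (r + 4) : ℚ))
        - ((r:ℚ)+2)*(2*(r:ℚ)+5) * (((r + c + 3).choose (r + 3) : ℚ))
        + ((r:ℚ)+2)^2 * (((r + c + 2).choose (r + 2) : ℚ)) )
      - ((r:ℚ)+1) * ( ((r:ℚ)+1)*((r:ℚ)+2) * (((r + c + 3).choose (r + 3) : ℚ))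
        - ((r:ℚ)+1)*(2*(r:ℚ)+3) * (((r + c + 2).choose (r + 2) : ℚ))
        + ((r:ℚ)+1)^2 * (((r + c + 1).choose (r + 1) : ℚ)) ) := by
  have step3 : ∀ k ∈ range (c+1), (k : ℚ)^3 * ((r + k).choose r : ℚ) =
      ((r : ℚ) + 1) * ((k:ℚ)^2 * ((r + 1 + k).choose (r + 1) : ℚ))
        - ((r : ℚ) + 1) * ((k:ℚ)^2 * ((r + k).choose r : ℚ)) := by
    intro k _
    have := stepQ r k
    nlinarith [this]
  rw [Finset.sum_congr rfl step3, Finset.sum_sub_distrib, ← Finset.mul_sum, ← Finset.mul_sum,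
    sum2Q r c, sum2Q (r+1) c,
    show r + 1 + c + 3 = r + c + 4 from by omega,
    show r + 1 + c + 2 = r + c + 3 from by omega,
    show r + 1 + c + 1 = r + c + 2 from by omega,
    show r + 1 + 3 = r + 4 from rfl, show r + 1 + 2 = r + 3 from rfl,
    show r + 1 + 1 = r + 2 from rfl]
  push_cast
  ring


/-- The third central moment of the single-man request distribution
`p(i) = C(f+c-i, f-1)/C(c+f, c)` on `{1, …, c+1}` equals
`(c+f+1)·c·f·(2cf + f² − 2c − 1)/((f+1)³·(f+2)·(f+3))`. -/
theorem single_man_third_moment (c f : ℕ) (hf : 1 ≤ f) :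
    ∑ i ∈ Finset.Icc 1 (c + 1),
        ((i : ℚ) - ((c : ℚ) + f + 1) / ((f : ℚ) + 1)) ^ 3 *
          ((Nat.choose (f + c - i) (f - 1) : ℚ) / (Nat.choose (c + f) c : ℚ)) =
      (((c : ℚ) + f + 1) * c * f * (2 * c * f + (f : ℚ) ^ 2 - 2 * c - 1)) /
        (((f : ℚ) + 1) ^ 3 * ((f : ℚ) + 2) * ((f : ℚ) + 3)) := by
  obtain ⟨r, rfl⟩ : ∃ r, f = r + 1 := ⟨f - 1, by omega⟩
  set K : ℚ := ((c + (r + 1)).choose c : ℚ) with hKdef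
  set q : ℚ := (c : ℚ) * ((r : ℚ) + 1) / ((r : ℚ) + 2) with hq
  have hr2 : ((r : ℚ) + 2) ≠ 0 := by positivity
  have hr3 : ((r : ℚ) + 3) ≠ 0 := by positivity
  have hr4 : ((r : ℚ) + 4) ≠ 0 := by positivity
  have hK : K ≠ 0 := by
    have := Nat.choose_pos (show c ≤ c + (r + 1) from Nat.le_add_right _ _)
    exact_mod_cast Nat.cast_ne_zero.mpr this.ne'
  have key : ∑ j ∈ Finset.range (c + 1),
      ((q - (j : ℚ)) ^ 3 * (((r + j).choose r : ℚ))) / K =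
      (((c : ℚ) + (r + 1 : ℕ) + 1) * c * (r + 1 : ℕ) *
          (2 * c * (r + 1 : ℕ) + ((r + 1 : ℕ) : ℚ) ^ 2 - 2 * c - 1)) /
        ((((r + 1 : ℕ) : ℚ) + 1) ^ 3 * (((r + 1 : ℕ) : ℚ) + 2) * (((r + 1 : ℕ) : ℚ) + 3)) := by
    have expand : ∀ j ∈ Finset.range (c + 1),
        ((q - (j : ℚ)) ^ 3 * (((r + j).choose r : ℚ))) =
          q ^ 3 * ((r + j).choose r : ℚ)
            - 3 * q ^ 2 * ((j : ℚ) * ((r + j).choose r : ℚ))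
            + 3 * q * ((j : ℚ) ^ 2 * ((r + j).choose r : ℚ))
            - (j : ℚ) ^ 3 * ((r + j).choose r : ℚ) := fun j _ => by ring
    rw [← Finset.sum_div, Finset.sum_congr rfl expand, Finset.sum_sub_distrib,
      Finset.sum_add_distrib, Finset.sum_sub_distrib, ← Finset.mul_sum, ← Finset.mul_sum,
      ← Finset.mul_sum, sum_chooseQ r c, sum1Q r c, sum2Q r c, sum3Q r c]
    have hn1 : (r + c + 2) * (r + c + 1).choose (r + 1)
        = (r + c + 2).choose (r + 2) * (r + 2) := Nat.add_one_mul_choose_eq (r + c + 1) (r + 1)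
    have hn2 : (r + c + 3) * (r + c + 2).choose (r + 2)
        = (r + c + 3).choose (r + 3) * (r + 3) := Nat.add_one_mul_choose_eq (r + c + 2) (r + 2)
    have hn3 : (r + c + 4) * (r + c + 3).choose (r + 3)
        = (r + c + 4).choose (r + 4) * (r + 4) := Nat.add_one_mul_choose_eq (r + c + 3) (r + 3)
    have e1 : ((r + c + 2).choose (r + 2) : ℚ)
        = ((r : ℚ) + c + 2) * ((r + c + 1).choose (r + 1) : ℚ) / ((r : ℚ) + 2) := by
      have h : ((r + c + 2) * (r + c + 1).choose (r + 1) : ℚ)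
          = ((r + c + 2).choose (r + 2) * (r + 2) : ℚ) := by exact_mod_cast congrArg (Nat.cast (R := ℚ)) hn1
      field_simp
      push_cast at h ⊢
      linarith
    have e2 : ((r + c + 3).choose (r + 3) : ℚ)
        = ((r : ℚ) + c + 3) * ((r + c + 2).choose (r + 2) : ℚ) / ((r : ℚ) + 3) := by
      have h : ((r + c + 3) * (r + c + 2).choose (r + 2) : ℚ)
          = ((r + c + 3).choose (r + 3) * (r + 3) : ℚ) := by exact_mod_cast congrArg (Nat.cast (R := ℚ)) hn2
      field_simp
      push_cast at h ⊢
      linarith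
    have e3 : ((r + c + 4).choose (r + 4) : ℚ)
        = ((r : ℚ) + c + 4) * ((r + c + 3).choose (r + 3) : ℚ) / ((r : ℚ) + 4) := by
      have h : ((r + c + 4) * (r + c + 3).choose (r + 3) : ℚ)
          = ((r + c + 4).choose (r + 4) * (r + 4) : ℚ) := by exact_mod_cast congrArg (Nat.cast (R := ℚ)) hn3
      field_simp
      push_cast at h ⊢
      linarith
    have hsym : ((r + c + 1).choose (r + 1) : ℚ) = K := by
      rw [hKdef]
      norm_cast
      rw [show r + c + 1 = c + (r + 1) from by omega]
      exact (Nat.choose_symm_add).symm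
    rw [e3, e2, e1, hsym, hq]
    push_cast
    field_simp
    ring
  rw [← Finset.Ico_add_one_right_eq_Icc, Finset.sum_Ico_eq_sum_range,
    show c + 1 + 1 - 1 = c + 1 from rfl, ← Finset.sum_range_reflect]
  refine Eq.trans (Finset.sum_congr rfl fun j hj => ?_) key
  simp only [Finset.mem_range] at hj
  have hjc : j ≤ c := by omega
  rw [show 1 + (c + 1 - 1 - j) = 1 + (c - j) from by omega,
    show r + 1 + c - (1 + (c - j)) = r + j from by omega,
    show r + 1 - 1 = r from rfl]
  have hb : ((1 + (c - j) : ℕ) : ℚ) - ((c : ℚ) + ((r + 1 : ℕ) : ℚ) + 1) / (((r + 1 : ℕ) : ℚ) + 1)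
      = q - (j : ℚ) := by
    rw [hq]
    push_cast [Nat.cast_sub hjc]
    field_simp
    ring
  rw [hb, mul_div_assoc]
end

section
/- For natural numbers c and f ≥ 1, the third central moment of q(i) = C(i-1, f-1)/C(c+f, c) on {f,…,c+f} equals −(c+f+1)·c·f·(2cf + f² − 2c − 1)/((f+1)³·(f+2)·(f+3)), the negative of the third central moment of the single-man distribution p. -/
open Finset

/-- Shift a sum over an `Icc` interval of naturals. -/
lemma sum_Icc_shift (a b k : ℕ) (F : ℕ → ℚ) :
    ∑ j ∈ Icc (a + k) (b + k), F j = ∑ j ∈ Icc a b, F (j + k) := by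
  rw [← map_add_right_Icc, Finset.sum_map]
  rfl

lemma sum_choose_shift (e n k : ℕ) :
    ∑ j ∈ Icc e n, (Nat.choose (j + k) (e + k) : ℚ) = Nat.choose (n + k + 1) (e + k + 1) := by
  rw [← sum_Icc_shift e n k (fun j => (Nat.choose j (e + k) : ℚ)), ← Nat.cast_sum,
    Nat.sum_Icc_choose]

lemma step_cast (n k : ℕ) :
    ((n : ℚ) + 1) * Nat.choose n k = ((k : ℚ) + 1) * Nat.choose (n + 1) (k + 1) := by
  have h : (n + 1) * Nat.choose n k = (k + 1) * Nat.choose (n + 1) (k + 1) := by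
    simpa [Nat.succ_eq_add_one, mul_comm] using Nat.add_one_mul_choose_eq n k
  exact_mod_cast h

lemma aux_third_moment (c e : ℕ) :
    ∑ j ∈ Icc e (c + e),
        (((j : ℚ) + 1) - ((e : ℚ) + 1) * ((c : ℚ) + e + 2) / ((e : ℚ) + 2)) ^ 3 *
          ((Nat.choose j e : ℚ) / (Nat.choose (c + e + 1) c : ℚ)) =
      -((((c : ℚ) + e + 2) * c * ((e : ℚ) + 1) *
            (2 * c * ((e : ℚ) + 1) + ((e : ℚ) + 1) ^ 2 - 2 * c - 1)) /
        ((((e : ℚ) + 2)) ^ 3 * ((e : ℚ) + 3) * ((e : ℚ) + 4))) := by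
  set μ : ℚ := ((e : ℚ) + 1) * ((c : ℚ) + e + 2) / ((e : ℚ) + 2) with hμ
  set D : ℚ := (Nat.choose (c + e + 1) c : ℚ) with hD
  have expand : ∀ j ∈ Icc e (c + e),
      (((j : ℚ) + 1) - μ) ^ 3 * ((Nat.choose j e : ℚ) / D)
      = (-μ ^ 3 * (Nat.choose (j + 0) (e + 0) : ℚ)
        + (3 * μ ^ 2 + 3 * μ + 1) * ((e : ℚ) + 1) * (Nat.choose (j + 1) (e + 1) : ℚ)
        + (-3 * μ - 3) * (((e : ℚ) + 1) * ((e : ℚ) + 2)) * (Nat.choose (j + 2) (e + 2) : ℚ)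
        + ((e : ℚ) + 1) * ((e : ℚ) + 2) * ((e : ℚ) + 3) * (Nat.choose (j + 3) (e + 3) : ℚ)) / D := by
    intro j _
    rw [mul_div_assoc']
    congr 1
    have h1 := step_cast j e
    have h2 := step_cast (j + 1) (e + 1)
    have h3 := step_cast (j + 2) (e + 2)
    push_cast at h1 h2 h3
    simp only [Nat.add_zero]
    linear_combination (3 * μ ^ 2 + 3 * μ + 1 + ((j : ℚ) - 3 * μ) * ((j : ℚ) + 2)) * h1 +
      (((e : ℚ) + 1) * ((j : ℚ) - 3 * μ)) * h2 + (((e : ℚ) + 1) * ((e : ℚ) + 2)) * h3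
  rw [Finset.sum_congr rfl expand, ← Finset.sum_div]
  simp only [Finset.sum_add_distrib, ← Finset.mul_sum, sum_choose_shift]
  have hchoose : Nat.choose (c + e + 1) c = Nat.choose (c + e + 1) (e + 1) := by
    rw [← Nat.choose_symm (show c ≤ c + e + 1 by omega)]
    congr 1
    omega
  rw [hD, hchoose]
  have q1 := step_cast (c + e + 1) (e + 1)
  have q2 := step_cast (c + e + 2) (e + 2)
  have q3 := step_cast (c + e + 3) (e + 3)
  push_cast at q1 q2 q3
  norm_num at q1 q2 q3 ⊢
  set S0 : ℚ := (Nat.choose (c + e + 1) (e + 1) : ℚ) with hS0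
  set S1 : ℚ := (Nat.choose (c + e + 2) (e + 2) : ℚ) with hS1
  set S2 : ℚ := (Nat.choose (c + e + 3) (e + 3) : ℚ) with hS2
  set S3 : ℚ := (Nat.choose (c + e + 4) (e + 4) : ℚ) with hS3
  have he2 : ((e : ℚ) + 2) ≠ 0 := by positivity
  have he3 : ((e : ℚ) + 3) ≠ 0 := by positivity
  have he4 : ((e : ℚ) + 4) ≠ 0 := by positivity
  have hS0' : S0 ≠ 0 := by
    have := Nat.choose_pos (show e + 1 ≤ c + e + 1 by omega)
    rw [hS0]
    exact_mod_cast this.ne'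
  have e1 : S1 = ((c : ℚ) + e + 2) * S0 / ((e : ℚ) + 2) := by
    field_simp
    linarith [q1]
  have e2 : S2 = ((c : ℚ) + e + 3) * S1 / ((e : ℚ) + 3) := by
    field_simp
    linarith [q2]
  have e3 : S3 = ((c : ℚ) + e + 4) * S2 / ((e : ℚ) + 4) := by
    field_simp
    linarith [q3]
  rw [e3, e2, e1, hμ]
  field_simp
  ring

/-- The third central moment of the total-requests distribution
`q(i) = C(i-1, f-1)/C(c+f, c)` on `{f, …, c+f}` equals
`−(c+f+1)·c·f·(2cf + f² − 2c − 1)/((f+1)³·(f+2)·(f+3))`. -/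
theorem total_requests_third_moment (c f : ℕ) (hf : 1 ≤ f) :
    ∑ i ∈ Finset.Icc f (c + f),
        ((i : ℚ) - (f : ℚ) * ((c : ℚ) + f + 1) / ((f : ℚ) + 1)) ^ 3 *
          ((Nat.choose (i - 1) (f - 1) : ℚ) / (Nat.choose (c + f) c : ℚ)) =
      -((((c : ℚ) + f + 1) * c * f * (2 * c * f + (f : ℚ) ^ 2 - 2 * c - 1)) /
        (((f : ℚ) + 1) ^ 3 * ((f : ℚ) + 2) * ((f : ℚ) + 3))) := by
  obtain ⟨e, rfl⟩ : ∃ e, f = e + 1 := ⟨f - 1, (Nat.succ_pred_eq_of_pos hf).symm⟩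
  rw [show c + (e + 1) = c + e + 1 by omega]
  rw [sum_Icc_shift e (c + e) 1]
  have hpt : ∀ j ∈ Icc e (c + e),
      (((j + 1 : ℕ) : ℚ) - ((e + 1 : ℕ) : ℚ) * ((c : ℚ) + ((e + 1 : ℕ) : ℚ) + 1) /
            (((e + 1 : ℕ) : ℚ) + 1)) ^ 3 *
          ((Nat.choose ((j + 1) - 1) ((e + 1) - 1) : ℚ) / (Nat.choose (c + e + 1) c : ℚ))
      = (((j : ℚ) + 1) - ((e : ℚ) + 1) * ((c : ℚ) + e + 2) / ((e : ℚ) + 2)) ^ 3 *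
          ((Nat.choose j e : ℚ) / (Nat.choose (c + e + 1) c : ℚ)) := by
    intro j _
    have h1 : (j + 1) - 1 = j := rfl
    have h2 : (e + 1) - 1 = e := rfl
    rw [h1, h2]
    push_cast
    ring_nf
  rw [Finset.sum_congr rfl hpt, aux_third_moment c e]
  push_cast
  ring
end

section
/- Fix k ≥ 1 and i ≥ 1. With c = k·f, the probability p(i) = C(f+c-i, f-1)/C(c+f, c) converges as f → ∞ to (1/(k+1))·(k/(k+1))^{i-1}, the probability mass of the geometric distribution Ge(1/(k+1)) at i. -/
open Filter Topology Polynomial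

/-!
With `n = c + f`, `p(i) = f · c(c-1)⋯(c-i+2) / (n(n-1)⋯(n-i+1))`. For `c = k f` both numerator
and denominator are polynomials of degree `i` in `f`, with leading coefficients `k^(i-1)` and
`(k+1)^i`, so their ratio tends to `k^(i-1)/(k+1)^i`.
-/

theorem tendsto_descPochhammer_eval_mul_div_pow (a : ℝ) (j : ℕ) :
    Tendsto (fun x : ℝ => (descPochhammer ℝ j).eval (a * x) / x ^ j) atTop (𝓝 (a ^ j)) := by
  have hfactor (l : ℕ) : Tendsto (fun x : ℝ => a - l / x) atTop (𝓝 a) := by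
    simpa using (tendsto_const_nhds (x := a)).sub (tendsto_const_nhds.div_atTop tendsto_id)
  have hprod := tendsto_finsetProd (Finset.range j) fun l _ => hfactor l
  rw [Finset.prod_const, Finset.card_range] at hprod
  refine hprod.congr' ?_
  filter_upwards [eventually_ne_atTop 0] with x hx
  have hpow :=
    Finset.prod_mul_pow_card (s := Finset.range j) (f := fun l : ℕ => a - l / x) (b := x)
  rw [Finset.card_range] at hpow
  rw [descPochhammer_eval_eq_prod_range, eq_div_iff (pow_ne_zero _ hx), hpow]
  refine Finset.prod_congr rfl fun l _ => ?_
  field_simp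

theorem tendsto_mul_descPochhammer_div_descPochhammer (a : ℝ) {b : ℝ} (hb : b ≠ 0) (j : ℕ) :
    Tendsto (fun x : ℝ => x * (descPochhammer ℝ j).eval (a * x) /
      (descPochhammer ℝ (j + 1)).eval (b * x)) atTop (𝓝 (a ^ j / b ^ (j + 1))) := by
  refine ((tendsto_descPochhammer_eval_mul_div_pow a j).div
    (tendsto_descPochhammer_eval_mul_div_pow b (j + 1)) (pow_ne_zero _ hb)).congr' ?_
  filter_upwards [eventually_ne_atTop 0] with x hx
  simp only [Pi.div_apply, pow_succ]
  field_simp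

/-- Both sides times `r!` count the ordered choices of `j + r` elements out of `n`. -/
theorem Nat.choose_sub_mul_descFactorial (n r j : ℕ) :
    (n - j).choose r * n.descFactorial j = n.choose r * (n - r).descFactorial j := by
  apply Nat.eq_of_mul_eq_mul_left r.factorial_pos
  calc r.factorial * ((n - j).choose r * n.descFactorial j)
      = (n - j).descFactorial (j + r - j) * n.descFactorial j := by
        rw [Nat.add_sub_cancel_left, Nat.descFactorial_eq_factorial_mul_choose (n - j) r,
          Nat.mul_assoc]
    _ = (n - r).descFactorial (r + j - r) * n.descFactorial r := by
        rw [Nat.descFactorial_mul_descFactorial (Nat.le_add_right j r),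
          Nat.descFactorial_mul_descFactorial (Nat.le_add_right r j), Nat.add_comm]
    _ = r.factorial * (n.choose r * (n - r).descFactorial j) := by
        rw [Nat.add_sub_cancel_left, Nat.descFactorial_eq_factorial_mul_choose n r]
        ring

theorem cast_choose_sub_div_choose_eq_mul_descFactorial_div (m r j : ℕ) (hj : j ≤ m + r) :
    ((m + r - j).choose r : ℝ) / (m + r + 1).choose m
      = (r + 1) * m.descFactorial j / (m + r + 1).descFactorial (j + 1) := by
  have hchoose : (m + r + 1).choose m * (r + 1) = (m + r + 1) * (m + r).choose r := by
    rw [Nat.choose_symm_of_eq_add (a := m) (b := r + 1) (by ring), Nat.add_one_mul_choose_eq]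
  have hcross := Nat.choose_sub_mul_descFactorial (m + r) r j
  rw [Nat.add_sub_cancel] at hcross
  have hnat : (m + r - j).choose r * (m + r + 1).descFactorial (j + 1)
      = (r + 1) * m.descFactorial j * (m + r + 1).choose m := by
    calc _ = (m + r + 1) * (m + r).choose r * m.descFactorial j := by
          rw [Nat.succ_descFactorial_succ, mul_assoc _ _ (m.descFactorial j), ← hcross]
          ring
      _ = _ := by rw [← hchoose]; ring
  have hchoose_pos : 0 < (m + r + 1).choose m := Nat.choose_pos (by omega)
  have hdesc_pos : 0 < (m + r + 1).descFactorial (j + 1) := Nat.descFactorial_pos.mpr (by omega)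
  rw [div_eq_div_iff (by positivity) (by positivity)]
  exact_mod_cast hnat

theorem single_man_limit_geometric_general (k i : ℕ) (hi : 1 ≤ i) :
    Tendsto
      (fun f : ℕ =>
        (Nat.choose (f + k * f - i) (f - 1) : ℝ) / (Nat.choose (k * f + f) (k * f) : ℝ))
      atTop
      (nhds ((1 / ((k : ℝ) + 1)) * ((k : ℝ) / ((k : ℝ) + 1)) ^ (i - 1))) := by
  obtain ⟨j, rfl⟩ : ∃ j, i = j + 1 := ⟨i - 1, by omega⟩
  have hlimit : (k : ℝ) ^ j / ((k : ℝ) + 1) ^ (j + 1)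
      = 1 / ((k : ℝ) + 1) * ((k : ℝ) / ((k : ℝ) + 1)) ^ j := by
    rw [div_pow, pow_succ]
    field_simp
  rw [Nat.add_sub_cancel, ← hlimit]
  refine ((tendsto_mul_descPochhammer_div_descPochhammer (k : ℝ) (b := (k : ℝ) + 1)
    (by positivity) j).comp tendsto_natCast_atTop_atTop).congr' ?_
  filter_upwards [eventually_ge_atTop (j + 1)] with f hf
  obtain ⟨r, rfl⟩ : ∃ r, f = r + 1 := ⟨f - 1, by omega⟩
  rw [show r + 1 + k * (r + 1) - (j + 1) = k * (r + 1) + r - j by omega, Nat.add_sub_cancel,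
    show k * (r + 1) + (r + 1) = k * (r + 1) + r + 1 by ring,
    cast_choose_sub_div_choose_eq_mul_descFactorial_div (k * (r + 1)) r j (by omega),
    Function.comp_apply,
    show (k : ℝ) * ((r + 1 : ℕ) : ℝ) = ((k * (r + 1) : ℕ) : ℝ) by push_cast; ring,
    show ((k : ℝ) + 1) * ((r + 1 : ℕ) : ℝ) = ((k * (r + 1) + r + 1 : ℕ) : ℝ) by
      push_cast; ring,
    descPochhammer_eval_eq_descFactorial, descPochhammer_eval_eq_descFactorial]
  push_cast
  ring

/-- With `c = k·f`, the single-man request probability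
`p(i) = C(f+c-i, f-1)/C(c+f, c)` converges as `f → ∞` to the geometric
probability `(1/(k+1))·(k/(k+1))^(i-1)`. -/
theorem single_man_limit_geometric (k i : ℕ) (hk : 1 ≤ k) (hi : 1 ≤ i) :
    Tendsto
      (fun f : ℕ =>
        (Nat.choose (f + k * f - i) (f - 1) : ℝ) / (Nat.choose (k * f + f) (k * f) : ℝ))
      atTop
      (nhds ((1 / ((k : ℝ) + 1)) * ((k : ℝ) / ((k : ℝ) + 1)) ^ (i - 1))) :=
  single_man_limit_geometric_general k i hi
end

section
/- For natural numbers c and f ≥ 1, the coefficient of z^c x^i in the Taylor expansion of x^f/((1−z)(1−xz)^f) equals C(i−1, f−1) for f ≤ i ≤ c+f and 0 otherwise. -/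
/-!
Expanding `1/(1 - z)` and `1/(1 - xz)^f` gives
`1/((1 - z)(1 - xz)^f) = ∑_{a ≤ b} multichoose f a · x^a z^b`,
so the coefficient of `x^i z^c` in `x^f/((1 - z)(1 - xz)^f)` is `multichoose f (i - f) = C(i-1, f-1)`
when `f ≤ i ≤ c + f`. The expansion is checked by multiplying out: multiplying the series
for `f + 1` by `1 - xz` gives the series for `f` by Pascal's rule for `multichoose`.
-/

open MvPowerSeries Finsupp

theorem MvPowerSeries.coeff_mul_one_sub_monomial {σ R : Type*} [CommRing R]
    (φ : MvPowerSeries σ R) (e d : σ →₀ ℕ) :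
    coeff d (φ * (1 - monomial e 1)) = coeff d φ - if e ≤ d then coeff (d - e) φ else 0 := by
  rw [mul_sub, mul_one, map_sub, coeff_mul_monomial]
  simp only [mul_one]

namespace TotalRequests

variable {R : Type*} [CommRing R]

theorem single_zero_add_single_one_le_iff (a b : ℕ) (d : Fin 2 →₀ ℕ) :
    single 0 a + single 1 b ≤ d ↔ a ≤ d 0 ∧ b ≤ d 1 := by
  simp [Finsupp.le_def, Fin.forall_fin_two]

theorem X_zero_mul_X_one :
    (X 0 * X 1 : MvPowerSeries (Fin 2) R) = monomial (single 0 1 + single 1 1) 1 := by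
  rw [X_def, X_def, monomial_mul_monomial, one_mul]

/-- The expansion of `1/((1 - z)(1 - xz)^f)`, with `x = X 0` and `z = X 1`. -/
def invSeries (R : Type*) [CommRing R] (f : ℕ) : MvPowerSeries (Fin 2) R :=
  fun d => if d 0 ≤ d 1 then (Nat.multichoose f (d 0) : R) else 0

theorem coeff_invSeries (f : ℕ) (d : Fin 2 →₀ ℕ) :
    coeff d (invSeries R f) = if d 0 ≤ d 1 then (Nat.multichoose f (d 0) : R) else 0 :=
  rfl

theorem invSeries_zero_mul : invSeries R 0 * (1 - X 1) = 1 := by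
  ext d
  rw [X_def, coeff_mul_one_sub_monomial, coeff_one]
  have hd : d = 0 ↔ d 0 = 0 ∧ d 1 = 0 := by
    simp [Finsupp.ext_iff, Fin.forall_fin_two]
  simp only [coeff_invSeries, single_le_iff, Finsupp.tsub_apply, single_apply, hd, if_true,
    one_ne_zero, if_false, tsub_zero]
  generalize d 0 = a, d 1 = b
  cases a <;> cases b <;> simp [Nat.multichoose_zero_succ]

theorem invSeries_succ_mul (f : ℕ) : invSeries R (f + 1) * (1 - X 0 * X 1) = invSeries R f := by
  ext d
  rw [X_zero_mul_X_one, coeff_mul_one_sub_monomial]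
  simp only [coeff_invSeries, single_zero_add_single_one_le_iff, Finsupp.tsub_apply,
    Finsupp.add_apply, single_apply, if_true, one_ne_zero, zero_ne_one, if_false, add_zero,
    zero_add]
  generalize d 0 = a, d 1 = b
  rcases a with _ | a <;> rcases b with _ | b
  · simp
  · simp
  · simp
  · by_cases hab : a ≤ b <;> simp [hab, Nat.multichoose_succ_succ]

theorem invSeries_mul (f : ℕ) : invSeries R f * ((1 - X 1) * (1 - X 0 * X 1) ^ f) = 1 := by
  induction f with
  | zero => rw [pow_zero, mul_one, invSeries_zero_mul]
  | succ f ih =>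
    calc invSeries R (f + 1) * ((1 - X 1) * (1 - X 0 * X 1) ^ (f + 1))
        = invSeries R (f + 1) * (1 - X 0 * X 1) * ((1 - X 1) * (1 - X 0 * X 1) ^ f) := by ring
      _ = 1 := by rw [invSeries_succ_mul, ih]

theorem multichoose_sub_eq_choose {f i : ℕ} (hf : 1 ≤ f) (hi : f ≤ i) :
    Nat.multichoose f (i - f) = Nat.choose (i - 1) (f - 1) := by
  rw [Nat.multichoose_eq, show f + (i - f) - 1 = i - 1 by omega]
  exact Nat.choose_symm_of_eq_add (by omega)

end TotalRequests

open TotalRequests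

/-- The coefficient of `z^c x^i` in `x^f/((1−z)(1−xz)^f)` equals `C(i−1, f−1)` for
`f ≤ i ≤ c+f`, and `0` otherwise. Here `X 0` plays the role of `x`, and `X 1` that of `z`. -/
theorem total_requests_gf (c f : ℕ) (hf : 1 ≤ f) (i : ℕ) :
    MvPowerSeries.coeff (Finsupp.single (0 : Fin 2) i + Finsupp.single (1 : Fin 2) c)
        ((X (0 : Fin 2)) ^ f *
          ((1 - X (1 : Fin 2)) * (1 - X (0 : Fin 2) * X (1 : Fin 2)) ^ f)⁻¹
          : MvPowerSeries (Fin 2) ℚ) =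
      if f ≤ i ∧ i ≤ c + f then (Nat.choose (i - 1) (f - 1) : ℚ) else 0 := by
  have hunit : constantCoeff ((1 - X 1) * (1 - X 0 * X 1) ^ f : MvPowerSeries (Fin 2) ℚ) ≠ 0 := by
    simp
  have hfi : single (0 : Fin 2) f ≤ single 0 i + single 1 c ↔ f ≤ i := by
    simp [Finsupp.le_def, Fin.forall_fin_two]
  rw [(MvPowerSeries.inv_eq_iff_mul_eq_one hunit).mpr (invSeries_mul f), X_pow_eq,
    coeff_monomial_mul, one_mul, coeff_invSeries]
  simp only [hfi, Finsupp.tsub_apply, Finsupp.add_apply, single_apply, if_true, one_ne_zero,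
    zero_ne_one, if_false, add_zero, zero_add, tsub_zero]
  by_cases hi : f ≤ i
  · simp only [hi, true_and, if_true, tsub_le_iff_right, multichoose_sub_eq_choose hf hi]
  · simp [hi]
end

section
/- For natural numbers c and f ≥ 1, ∑_{i=1}^{c+1} i² · C(f+c−i, f−1) = C(c+f, c) · [ (c+f+1)²/(f+1)² + (c+f+1)·c·f/((f+1)²(f+2)) ]. -/
open Finset

private lemma hs (b : ℕ) : ∀ n : ℕ, ∑ i ∈ range (n + 1), Nat.choose i b = Nat.choose (n + 1) (b + 1) := by
  intro n
  induction n with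
  | zero =>
      rw [Finset.sum_range_one]
      cases b with
      | zero => rfl
      | succ b => rw [Nat.choose_zero_succ, Nat.choose_eq_zero_of_lt (by omega)]
  | succ n ih =>
      rw [Finset.sum_range_succ, ih, Nat.choose_succ_succ' (n + 1) b, Nat.add_comm]

private lemma vand (b : ℕ) : ∀ n a : ℕ,
    ∑ i ∈ range (n + 1), Nat.choose i a * Nat.choose (n - i) b
      = Nat.choose (n + 1) (a + b + 1) := by
  intro n
  induction n with
  | zero =>
      intro a
      rw [Finset.sum_range_one]
      rcases a with _ | a
      · rcases b with _ | b
        · rfl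
        · rw [Nat.choose_zero_succ, mul_zero, Nat.choose_eq_zero_of_lt (by omega)]
      · rw [Nat.choose_zero_succ, zero_mul, Nat.choose_eq_zero_of_lt (by omega)]
  | succ n ih =>
      intro a
      cases a with
      | zero =>
          simp only [Nat.choose_zero_right, one_mul, Nat.zero_add]
          have e : ∀ x ∈ range (n + 2), Nat.choose (n + 1 - x) b = Nat.choose (n + 2 - 1 - x) b := by
            intro x _; congr 1
          rw [show n + 1 + 1 = n + 2 from rfl, Finset.sum_congr rfl e,
            Finset.sum_range_reflect (fun j => Nat.choose j b) (n + 2)]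
          exact hs b (n + 1)
      | succ a =>
          rw [Finset.sum_range_succ']
          have e0 : Nat.choose 0 (a + 1) * Nat.choose (n + 1 - 0) b = 0 := by
            simp [Nat.choose_zero_succ]
          have e1 : ∀ i ∈ range (n + 1), Nat.choose (i + 1) (a + 1) * Nat.choose (n + 1 - (i + 1)) b
              = Nat.choose i a * Nat.choose (n - i) b + Nat.choose i (a + 1) * Nat.choose (n - i) b := by
            intro i _
            rw [Nat.choose_succ_succ' i a, add_mul, Nat.succ_sub_succ]
          rw [e0, add_zero, Finset.sum_congr rfl e1, Finset.sum_add_distrib, ih a, ih (a + 1)]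
          rw [show a + 1 + b + 1 = (a + b + 1) + 1 from by omega,
            Nat.choose_succ_succ' (n + 1) (a + b + 1)]

private lemma two_mul_choose (i : ℕ) : 2 * Nat.choose (i + 1) 2 = i ^ 2 + i := by
  rw [Nat.choose_two_right, Nat.add_sub_cancel, mul_comm (i + 1) i,
    Nat.mul_div_cancel' (Nat.even_mul_succ_self i).two_dvd]
  ring

/-- The second-moment identity for the single-man request distribution:
`∑_{i=1}^{c+1} i²·C(f+c−i, f−1) = C(c+f, c)·[(c+f+1)²/(f+1)² + (c+f+1)cf/((f+1)²(f+2))]`. -/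
theorem single_man_second_moment (c f : ℕ) (hf : 1 ≤ f) :
    ∑ i ∈ Finset.Icc 1 (c + 1), (i : ℚ) ^ 2 * (Nat.choose (f + c - i) (f - 1) : ℚ) =
      (Nat.choose (c + f) c : ℚ) *
        (((c : ℚ) + f + 1) ^ 2 / ((f : ℚ) + 1) ^ 2 +
          ((c : ℚ) + f + 1) * c * f / (((f : ℚ) + 1) ^ 2 * ((f : ℚ) + 2))) := by
  obtain ⟨g, rfl⟩ : ∃ g, f = g + 1 := ⟨f - 1, by omega⟩
  -- first moment sum
  have V1 : ∑ i ∈ Icc 1 (c + 1), i * Nat.choose (g + 1 + c - i) g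
      = Nat.choose (g + c + 2) (g + 2) := by
    have h := vand g (g + c + 1) 1
    rw [show (1 : ℕ) + g + 1 = g + 2 by omega] at h
    rw [← h]
    have e : ∀ i ∈ Icc 1 (c + 1), i * Nat.choose (g + 1 + c - i) g
        = Nat.choose i 1 * Nat.choose (g + c + 1 - i) g := by
      intro i _
      rw [Nat.choose_one_right, show g + 1 + c - i = g + c + 1 - i from by omega]
    rw [Finset.sum_congr rfl e]
    apply Finset.sum_subset
    · intro x hx
      simp only [Finset.mem_Icc] at hx
      simp only [Finset.mem_range]
      omega
    · intro x hx hnx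
      simp only [Finset.mem_range] at hx
      simp only [Finset.mem_Icc, not_and, not_le] at hnx
      rcases Nat.eq_zero_or_pos x with rfl | h0
      · simp
      · have hlt : g + c + 1 - x < g := by omega
        rw [Nat.choose_eq_zero_of_lt hlt, mul_zero]
  -- the Vandermonde-type sum for weight C(i+1,2)
  have V2 : ∑ i ∈ Icc 1 (c + 1), Nat.choose (i + 1) 2 * Nat.choose (g + 1 + c - i) g
      = Nat.choose (g + c + 3) (g + 3) := by
    have h := vand g (g + c + 2) 2
    rw [show (2 : ℕ) + g + 1 = g + 3 by omega] at h
    rw [Finset.sum_range_succ'] at h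
    have hz : Nat.choose 0 2 * Nat.choose (g + c + 2 - 0) g = 0 := by
      norm_num [Nat.choose]
    rw [hz, add_zero] at h
    rw [← h]
    have e : ∀ i ∈ Icc 1 (c + 1), Nat.choose (i + 1) 2 * Nat.choose (g + 1 + c - i) g
        = Nat.choose (i + 1) 2 * Nat.choose (g + c + 2 - (i + 1)) g := by
      intro i _
      rw [show g + 1 + c - i = g + c + 2 - (i + 1) from by omega]
    rw [Finset.sum_congr rfl e]
    apply Finset.sum_subset
    · intro x hx
      simp only [Finset.mem_Icc] at hx
      simp only [Finset.mem_range]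
      omega
    · intro x hx hnx
      simp only [Finset.mem_range] at hx
      simp only [Finset.mem_Icc, not_and, not_le] at hnx
      rcases Nat.eq_zero_or_pos x with rfl | h0
      · norm_num [Nat.choose]
      · have hlt : g + c + 2 - (x + 1) < g := by omega
        rw [Nat.choose_eq_zero_of_lt hlt, mul_zero]
  -- key natural-number identity
  have key : (∑ i ∈ Icc 1 (c + 1), i ^ 2 * Nat.choose (g + 1 + c - i) g)
      + Nat.choose (g + c + 2) (g + 2) = 2 * Nat.choose (g + c + 3) (g + 3) := by
    rw [← V2, ← V1, Finset.mul_sum, ← Finset.sum_add_distrib]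
    apply Finset.sum_congr rfl
    intro i _
    rw [← mul_assoc, two_mul_choose i, add_mul]
  -- pass to ℚ
  set A : ℚ := (Nat.choose (g + c + 1) (g + 1) : ℚ) with hA
  set B : ℚ := (Nat.choose (g + c + 2) (g + 2) : ℚ) with hB
  set D : ℚ := (Nat.choose (g + c + 3) (g + 3) : ℚ) with hD
  have hq : ((∑ i ∈ Icc 1 (c + 1), i ^ 2 * Nat.choose (g + 1 + c - i) g : ℕ) : ℚ) + B = 2 * D := by
    rw [hB, hD]
    exact_mod_cast key
  have hsumcast : ((∑ i ∈ Icc 1 (c + 1), i ^ 2 * Nat.choose (g + 1 + c - i) g : ℕ) : ℚ)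
      = ∑ i ∈ Icc 1 (c + 1), (i : ℚ) ^ 2 * (Nat.choose (g + 1 + c - i) g : ℚ) := by
    push_cast
    ring
  have hL : ∑ i ∈ Finset.Icc 1 (c + 1), (i : ℚ) ^ 2 * (Nat.choose (g + 1 + c - i) (g + 1 - 1) : ℚ)
      = 2 * D - B := by
    simp only [Nat.add_sub_cancel]
    rw [← hsumcast]
    linarith
  have n1 : (g + c + 2) * Nat.choose (g + c + 1) (g + 1) = Nat.choose (g + c + 2) (g + 2) * (g + 2) :=
    Nat.add_one_mul_choose_eq (g + c + 1) (g + 1)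
  have n2 : (g + c + 3) * Nat.choose (g + c + 2) (g + 2) = Nat.choose (g + c + 3) (g + 3) * (g + 3) :=
    Nat.add_one_mul_choose_eq (g + c + 2) (g + 2)
  have q1 : ((g : ℚ) + c + 2) * A = B * ((g : ℚ) + 2) := by
    rw [hA, hB]; exact_mod_cast n1
  have q2 : ((g : ℚ) + c + 3) * B = D * ((g : ℚ) + 3) := by
    rw [hB, hD]; exact_mod_cast n2
  have rA : (Nat.choose (c + (g + 1)) c : ℚ) = A := by
    rw [hA]
    norm_cast
    rw [show g + c + 1 = c + (g + 1) by omega]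
    exact Nat.choose_symm_add
  rw [hL, rA]
  have hg2 : ((g : ℚ) + 2) ≠ 0 := by positivity
  have hg3 : ((g : ℚ) + 3) ≠ 0 := by positivity
  have eB : B = A * ((g : ℚ) + c + 2) / ((g : ℚ) + 2) := by
    field_simp
    linarith [q1]
  have eD : D = A * ((g : ℚ) + c + 2) * ((g : ℚ) + c + 3) / (((g : ℚ) + 2) * ((g : ℚ) + 3)) := by
    rw [eB] at q2
    field_simp at q2 ⊢
    linarith [q2]
  rw [eB, eD]
  push_cast
  field_simp
  ring
end
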